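/- arXiv:2109.01925 — 3 statements merged into one kernel-verified Lean document; each statement's English description precedes it below -/
import Mathlib

section
/- For all integers d > ℓ ≥ 1 and any additive valuation, ℓ · MMS^{1,d}(M) ≤ MMS^{ℓ,d}(M) ≤ ℓ · MMS^{1,d-ℓ+1}(M). -/
open Finset

variable {α : Type*} [DecidableEq α]

/-- A partition of `M` into `d` (possibly empty) bundles. -/
def IsPartition (M : Finset α) (d : ℕ) (P : Fin d → Finset α) : Prop :=
  (∀ i j, i ≠ j → Disjoint (P i) (P j)) ∧ Finset.univ.biUnion P = M

/-- The ℓ-out-of-d maximin share: the maximum over d-partitions of M of the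
minimum over unions of ℓ parts of the total value. -/
noncomputable def MMS (v : α → ℝ) (M : Finset α) (l d : ℕ) : ℝ :=
  sSup { x | ∃ P : Fin d → Finset α, IsPartition M d P ∧
    x = sInf { y | ∃ S : Finset (Fin d), S.card = l ∧ y = ∑ i ∈ S, ∑ g ∈ P i, v g } }

/-!
Lower bound: in any `d`-partition, a union of `ℓ` bundles is worth at least `ℓ` times the
poorest bundle. Upper bound: in a `d`-partition, let `S` be `ℓ` bundles of least total value `x`.
Swapping shows that every bundle outside `S` is worth at least each bundle of `S`, hence at least
`x / ℓ`. Merging `S` into a single bundle (worth `x ≥ x / ℓ`, by nonnegativity) gives a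
`(d - ℓ + 1)`-partition all of whose bundles are worth at least `x / ℓ`.
-/

section minSum

variable {ι : Type*} {w : ι → ℝ} {l : ℕ}

/-- With `w i` the value of the `i`-th bundle, this is the inner minimum in `MMS`. -/
noncomputable def minSum (w : ι → ℝ) (l : ℕ) : ℝ :=
  sInf {y | ∃ S : Finset ι, S.card = l ∧ y = ∑ i ∈ S, w i}

theorem minSum_le [Finite ι] {S : Finset ι} (hS : S.card = l) : minSum w l ≤ ∑ i ∈ S, w i := by
  refine csInf_le ((Set.finite_range fun T : Finset ι => ∑ i ∈ T, w i).subset ?_).bddBelow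
    ⟨S, hS, rfl⟩
  rintro _ ⟨T, -, rfl⟩
  exact ⟨T, rfl⟩

theorem minSum_one_le [Finite ι] (i : ι) : minSum w 1 ≤ w i := by
  simpa using minSum_le (w := w) (card_singleton i)

theorem le_minSum [Fintype ι] {x : ℝ} (hl : l ≤ Fintype.card ι)
    (h : ∀ S : Finset ι, S.card = l → x ≤ ∑ i ∈ S, w i) : x ≤ minSum w l := by
  obtain ⟨S, -, hS⟩ := exists_subset_card_eq (s := (univ : Finset ι)) (by simpa using hl)
  exact le_csInf ⟨_, S, hS, rfl⟩ fun _ ⟨T, hT, hy⟩ => hy ▸ h T hT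

theorem le_minSum_one [Fintype ι] [Nonempty ι] {x : ℝ} (h : ∀ i, x ≤ w i) : x ≤ minSum w 1 :=
  le_minSum Fintype.card_pos fun S hS => by
    obtain ⟨i, rfl⟩ := card_eq_one.1 hS
    simpa using h i

theorem minSum_le_sum [Fintype ι] (hw : ∀ i, 0 ≤ w i) (hl : l ≤ Fintype.card ι) :
    minSum w l ≤ ∑ i, w i := by
  obtain ⟨S, -, hS⟩ := exists_subset_card_eq (s := (univ : Finset ι)) (by simpa using hl)
  exact (minSum_le hS).trans (sum_le_sum_of_subset_of_nonneg (subset_univ S) fun i _ _ => hw i)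

theorem mul_minSum_one_le_minSum [Fintype ι] (hl : l ≤ Fintype.card ι) :
    l * minSum w 1 ≤ minSum w l :=
  le_minSum hl fun S hS => by
    simpa [hS] using card_nsmul_le_sum S w _ fun i _ => minSum_one_le i

end minSum

theorem le_of_sum_minimal {ι β : Type*} [DecidableEq ι] [AddCommMonoid β] [PartialOrder β]
    [IsOrderedCancelAddMonoid β] {w : ι → β} {S : Finset ι}
    (hmin : ∀ T : Finset ι, T.card = S.card → ∑ i ∈ S, w i ≤ ∑ i ∈ T, w i)
    {i j : ι} (hi : i ∈ S) (hj : j ∉ S) : w i ≤ w j := by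
  have hj' : j ∉ S.erase i := fun h => hj (mem_of_mem_erase h)
  have hswap := hmin (insert j (S.erase i)) <| by
    rw [card_insert_of_notMem hj', card_erase_add_one hi]
  rw [sum_insert hj', ← add_sum_erase S w hi] at hswap
  exact le_of_add_le_add_right hswap

namespace IsPartition

variable {M : Finset α} {d : ℕ} {P : Fin d → Finset α}

theorem pairwiseDisjoint (hP : IsPartition M d P) (S : Set (Fin d)) : S.PairwiseDisjoint P :=
  fun i _ j _ hij => hP.1 i j hij

theorem sum_sum (hP : IsPartition M d P) (v : α → ℝ) :
    ∑ i, ∑ g ∈ P i, v g = ∑ g ∈ M, v g := by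
  rw [← sum_biUnion (hP.pairwiseDisjoint _), hP.2]

theorem subset (hP : IsPartition M d P) (i : Fin d) : P i ⊆ M :=
  hP.2 ▸ subset_biUnion_of_mem P (mem_univ i)

theorem sum_nonneg (hP : IsPartition M d P) {v : α → ℝ} (hv : ∀ g ∈ M, 0 ≤ v g) (i : Fin d) :
    0 ≤ ∑ g ∈ P i, v g :=
  Finset.sum_nonneg fun g hg => hv g (hP.subset i hg)

end IsPartition

theorem exists_isPartition (M : Finset α) {d : ℕ} (hd : 0 < d) : ∃ P, IsPartition M d P := by
  refine ⟨fun i => if i = ⟨0, hd⟩ then M else ∅, fun i j hij => ?_, ?_⟩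
  · by_cases hi : i = ⟨0, hd⟩
    · simp [hi, Ne.symm (hi ▸ hij)]
    · simp [hi]
  · ext g
    simp only [mem_biUnion, mem_univ, true_and]
    refine ⟨fun ⟨i, hg⟩ => ?_, fun hg => ⟨⟨0, hd⟩, by simpa using hg⟩⟩
    split_ifs at hg
    exacts [hg, absurd hg (notMem_empty g)]

def mergeParts {d : ℕ} (P : Fin d → Finset α) (S : Finset (Fin d)) : Option ↥Sᶜ → Finset α
  | none => S.biUnion P
  | some j => P j

theorem IsPartition.comp_mergeParts {M : Finset α} {d n : ℕ} {P : Fin d → Finset α}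
    (hP : IsPartition M d P) (S : Finset (Fin d)) (e : Fin n ≃ Option ↥Sᶜ) :
    IsPartition M n (mergeParts P S ∘ e) := by
  have hdisj : ∀ o o', o ≠ o' → Disjoint (mergeParts P S o) (mergeParts P S o') := by
    rintro (_ | ⟨j, hj⟩) (_ | ⟨j', hj'⟩) hne
    · exact absurd rfl hne
    · exact (disjoint_biUnion_left _ _ _).2 fun i hi =>
        hP.1 _ _ (ne_of_mem_of_not_mem hi (mem_compl.1 hj'))
    · exact (disjoint_biUnion_right _ _ _).2 fun i hi =>
        hP.1 _ _ (ne_of_mem_of_not_mem hi (mem_compl.1 hj)).symm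
    · exact hP.1 _ _ fun h => hne (congrArg some (Subtype.ext h))
  refine ⟨fun k k' hkk' => hdisj _ _ (e.injective.ne hkk'), ?_⟩
  ext g
  simp only [mem_biUnion, mem_univ, true_and, Function.comp_apply, e.exists_congr_left,
    Equiv.apply_symm_apply, Option.exists, mergeParts, Subtype.exists, mem_compl, ← hP.2]
  refine ⟨by rintro (⟨i, -, hg⟩ | ⟨i, -, hg⟩) <;> exact ⟨i, hg⟩, fun ⟨i, hg⟩ => ?_⟩
  by_cases hi : i ∈ S
  exacts [Or.inl ⟨i, hi, hg⟩, Or.inr ⟨i, hi, hg⟩]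

section MMS

variable {v : α → ℝ} {M : Finset α} {l d : ℕ}

theorem minSum_le_MMS (hv : ∀ g ∈ M, 0 ≤ v g) (hld : l ≤ d) {P : Fin d → Finset α}
    (hP : IsPartition M d P) : minSum (fun i => ∑ g ∈ P i, v g) l ≤ MMS v M l d := by
  refine le_csSup ⟨∑ g ∈ M, v g, ?_⟩ ⟨P, hP, rfl⟩
  rintro _ ⟨Q, hQ, rfl⟩
  rw [← hQ.sum_sum v]
  exact minSum_le_sum (hQ.sum_nonneg hv) (by simpa using hld)

theorem MMS_le (hd : 0 < d) {x : ℝ}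
    (h : ∀ P, IsPartition M d P → minSum (fun i => ∑ g ∈ P i, v g) l ≤ x) : MMS v M l d ≤ x := by
  obtain ⟨P, hP⟩ := exists_isPartition M hd
  refine csSup_le ⟨_, P, hP, rfl⟩ ?_
  rintro _ ⟨Q, hQ, rfl⟩
  exact h Q hQ

theorem mul_MMS_one_le_MMS (hv : ∀ g ∈ M, 0 ≤ v g) (hl : 0 < l) (hld : l ≤ d) :
    l * MMS v M 1 d ≤ MMS v M l d := by
  have hl₀ : (0 : ℝ) < l := by exact_mod_cast hl
  rw [mul_comm, ← le_div_iff₀ hl₀]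
  refine MMS_le (hl.trans_le hld) fun P hP => ?_
  calc minSum (fun i => ∑ g ∈ P i, v g) 1
      ≤ minSum (fun i => ∑ g ∈ P i, v g) l / l := by
        rw [le_div_iff₀' hl₀]
        exact mul_minSum_one_le_minSum (by simpa using hld)
    _ ≤ MMS v M l d / l := by gcongr; exact minSum_le_MMS hv hld hP

theorem MMS_le_mul_MMS_one (hv : ∀ g ∈ M, 0 ≤ v g) (hl : 1 ≤ l) (hld : l ≤ d) :
    MMS v M l d ≤ l * MMS v M 1 (d - l + 1) := by
  have hl₀ : (0 : ℝ) < l := by exact_mod_cast hl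
  refine MMS_le (by omega) fun P hP => ?_
  set w := fun i => ∑ g ∈ P i, v g
  obtain ⟨S, hS, hmin⟩ := exists_min_image (univ.powersetCard l) (fun S => ∑ i ∈ S, w i)
    (powersetCard_nonempty.2 (by simpa using hld))
  have hSl : S.card = l := (mem_powersetCard.1 hS).2
  have hout : ∀ j ∉ S, ∑ i ∈ S, w i ≤ l * w j := fun j hj => by
    simpa [hSl] using sum_le_card_nsmul S w (w j) fun i hi =>
      le_of_sum_minimal (fun T hT => hmin T (by simp [mem_powersetCard, hT, hSl])) hi hj
  let e : Fin (d - l + 1) ≃ Option ↥Sᶜ :=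
    (Fintype.equivFinOfCardEq (by simp [hSl])).symm
  calc minSum w l ≤ ∑ i ∈ S, w i := minSum_le hSl
    _ ≤ l * minSum (fun k => ∑ g ∈ (mergeParts P S ∘ e) k, v g) 1 := by
      rw [← div_le_iff₀' hl₀]
      refine le_minSum_one fun k => ?_
      rcases h : e k with _ | ⟨j, hj⟩
      · simp only [Function.comp_apply, h, mergeParts, sum_biUnion (hP.pairwiseDisjoint _)]
        exact div_le_self (sum_nonneg fun i _ => hP.sum_nonneg hv i) (by exact_mod_cast hl)
      · simp only [Function.comp_apply, h, mergeParts]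
        exact (div_le_iff₀' hl₀).2 (hout j (mem_compl.1 hj))
    _ ≤ l * MMS v M 1 (d - l + 1) := by
      gcongr
      exact minSum_le_MMS hv (by omega) (hP.comp_mergeParts S e)

end MMS

theorem mms_l_out_of_d_bounds (v : α → ℝ) (M : Finset α) (l d : ℕ)
    (hv : ∀ g ∈ M, 0 ≤ v g) (hl : 1 ≤ l) (hld : l < d) :
    (l : ℝ) * MMS v M 1 d ≤ MMS v M l d ∧
    MMS v M l d ≤ (l : ℝ) * MMS v M 1 (d - l + 1) :=
  ⟨mul_MMS_one_le_MMS hv hl hld.le, MMS_le_mul_MMS_one hv hl hld.le⟩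
end

section
/- The inequality ℓ·MMS^{1,d}(M) ≤ MMS^{ℓ,d}(M) can be strict: for ℓ = 2 and d ≥ 2, the instance with d−1 goods of value 1 and one good of value ε with 0 < ε < 1 satisfies MMS^{2,d}(M) = 1 + ε while 2·MMS^{1,d}(M) = 2ε. -/
/-!
With `d` goods and `d` bundles, either some bundle is empty or every bundle is a singleton, so some
bundle is worth at most `ε`. The other `d - 1` bundles share the remaining value, so one of them is
worth at most `1 + ε` minus that bundle's value, and the pair costs at most `1 + ε`. The partition
into singletons attains both bounds.
-/

open Finset

variable {α : Type*} [DecidableEq α]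

theorem exists_ne_le_of_sum_le {ι K : Type*} [Fintype ι] [DecidableEq ι]
    [Field K] [LinearOrder K] [IsStrictOrderedRing K] (w : ι → K) (i : ι) {c : K}
    (hι : 1 < Fintype.card ι) (h : ∑ j, w j ≤ w i + (Fintype.card ι - 1) * c) :
    ∃ j ≠ i, w j ≤ c := by
  have hcard : (univ.erase i).card = Fintype.card ι - 1 := card_erase_of_mem (mem_univ i)
  have hne : (univ.erase i).Nonempty := by rw [← card_pos, hcard]; omega
  have hsum : ∑ j ∈ univ.erase i, w j ≤ ∑ _j ∈ univ.erase i, c := by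
    rw [sum_const, hcard, nsmul_eq_mul, Nat.cast_sub hι.le, Nat.cast_one]
    linarith [add_sum_erase univ w (mem_univ i)]
  obtain ⟨j, hj, hjc⟩ := exists_le_of_sum_le hne hsum
  exact ⟨j, ne_of_mem_erase hj, hjc⟩

namespace IsPartition

variable {M : Finset α} {d : ℕ} {P : Fin d → Finset α}

theorem sum_sum_eq {β : Type*} [AddCommMonoid β] (hP : IsPartition M d P) (f : α → β) :
    ∑ i, ∑ g ∈ P i, f g = ∑ g ∈ M, f g := by
  rw [← hP.2, sum_biUnion fun i _ j _ hij => hP.1 i j hij]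

theorem sum_card_eq (hP : IsPartition M d P) : ∑ i, (P i).card = M.card := by
  simpa using hP.sum_sum_eq fun _ => (1 : ℕ)

theorem exists_mem (hP : IsPartition M d P) {g : α} (hg : g ∈ M) : ∃ i, g ∈ P i := by
  simpa [← hP.2] using hg

theorem card_eq_one_of_nonempty (hP : IsPartition M d P) (hcard : M.card = d)
    (h : ∀ i, (P i).Nonempty) (i : Fin d) : (P i).card = 1 := by
  by_contra hi
  have hlt : ∑ _j : Fin d, 1 < ∑ j, (P j).card :=
    sum_lt_sum (fun j _ => card_pos.mpr (h j))
      ⟨i, mem_univ i, by have := card_pos.mpr (h i); omega⟩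
  simp [hP.sum_card_eq, hcard] at hlt

theorem exists_sum_le_of_mem (hP : IsPartition M d P) (hcard : M.card = d) {v : α → ℝ}
    {g : α} (hg : g ∈ M) (hv : 0 ≤ v g) : ∃ i, ∑ x ∈ P i, v x ≤ v g := by
  by_cases h : ∀ i, (P i).Nonempty
  · obtain ⟨i, hi⟩ := hP.exists_mem hg
    have hPi : {g} = P i := eq_of_subset_of_card_le (singleton_subset_iff.mpr hi)
      (by rw [hP.card_eq_one_of_nonempty hcard h i, card_singleton])
    exact ⟨i, by rw [← hPi, sum_singleton]⟩
  · push Not at h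
    obtain ⟨i, hi⟩ := h
    exact ⟨i, by rwa [hi, sum_empty]⟩

end IsPartition

theorem isPartition_singleton {M : Finset α} {d : ℕ} (e : Fin d ≃ M) :
    IsPartition M d fun i => {(e i : α)} := by
  refine ⟨fun i j hij => disjoint_singleton.mpr fun h => hij (e.injective (Subtype.ext h)), ?_⟩
  ext x
  simp only [mem_biUnion, mem_univ, true_and, mem_singleton]
  exact ⟨by rintro ⟨i, rfl⟩; exact (e i).2, fun hx => ⟨e.symm ⟨x, hx⟩, by simp⟩⟩

theorem MMS_eq_of_isPartition {v : α → ℝ} {M : Finset α} {l d : ℕ} {c : ℝ}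
    {P₀ : Fin d → Finset α} (hP₀ : IsPartition M d P₀)
    (hP₀_ge : ∀ S : Finset (Fin d), S.card = l → c ≤ ∑ i ∈ S, ∑ g ∈ P₀ i, v g)
    (hle : ∀ P, IsPartition M d P →
      ∃ S : Finset (Fin d), S.card = l ∧ ∑ i ∈ S, ∑ g ∈ P i, v g ≤ c) :
    MMS v M l d = c := by
  have hbdd (w : Fin d → ℝ) :
      BddBelow {y | ∃ S : Finset (Fin d), S.card = l ∧ y = ∑ i ∈ S, w i} :=
    ((Set.finite_range fun S : Finset (Fin d) => ∑ i ∈ S, w i).subset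
      (by rintro y ⟨S, -, rfl⟩; exact ⟨S, rfl⟩)).bddBelow
  have hP₀_inf : sInf {y | ∃ S : Finset (Fin d), S.card = l ∧
      y = ∑ i ∈ S, ∑ g ∈ P₀ i, v g} = c := by
    obtain ⟨S, hS, hSc⟩ := hle P₀ hP₀
    refine IsLeast.csInf_eq ⟨⟨S, hS, le_antisymm (hP₀_ge S hS) hSc⟩, ?_⟩
    rintro y ⟨T, hT, rfl⟩
    exact hP₀_ge T hT
  refine IsGreatest.csSup_eq ⟨⟨P₀, hP₀, hP₀_inf.symm⟩, ?_⟩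
  rintro x ⟨P, hP, rfl⟩
  obtain ⟨S, hS, hSc⟩ := hle P hP
  exact (csInf_le (hbdd _) ⟨S, hS, rfl⟩).trans hSc

section OneSmallGood

variable {M : Finset α} {g₀ : α} {ε : ℝ} {v : α → ℝ}

theorem sum_eq_card_sub_one_add (hg₀ : g₀ ∈ M)
    (hv : ∀ g ∈ M, v g = if g = g₀ then ε else 1) :
    ∑ g ∈ M, v g = M.card - 1 + ε := by
  rw [sum_congr rfl hv, sum_ite, filter_eq' M g₀, if_pos hg₀, filter_ne' M g₀]
  simp [card_erase_of_mem hg₀, Nat.cast_sub (card_pos.mpr ⟨g₀, hg₀⟩)]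
  ring

theorem le_apply_of_mem (hε : ε ≤ 1) (hv : ∀ g ∈ M, v g = if g = g₀ then ε else 1)
    {g : α} (hg : g ∈ M) : ε ≤ v g := by
  rw [hv g hg]; split_ifs <;> linarith

theorem one_add_le_apply_add_apply (hε : ε ≤ 1)
    (hv : ∀ g ∈ M, v g = if g = g₀ then ε else 1)
    {g h : α} (hg : g ∈ M) (hh : h ∈ M) (hgh : g ≠ h) : 1 + ε ≤ v g + v h := by
  rw [hv g hg, hv h hh]
  split_ifs with h₁ h₂ <;> first | exact absurd (h₁.trans h₂.symm) hgh | linarith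

theorem IsPartition.exists_pair_sum_le {d : ℕ} {P : Fin d → Finset α} (hP : IsPartition M d P)
    (hd : 2 ≤ d) (hε : 0 ≤ ε) (hg₀ : g₀ ∈ M) (hcard : M.card = d)
    (hv : ∀ g ∈ M, v g = if g = g₀ then ε else 1) :
    ∃ i j, i ≠ j ∧ ∑ g ∈ P i, v g + ∑ g ∈ P j, v g ≤ 1 + ε := by
  have hvg₀ : v g₀ = ε := by simp [hv g₀ hg₀]
  obtain ⟨i, hi⟩ := hP.exists_sum_le_of_mem hcard hg₀ (hvg₀ ▸ hε)
  rw [hvg₀] at hi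
  obtain ⟨j, hji, hj⟩ := exists_ne_le_of_sum_le (fun j => ∑ g ∈ P j, v g) i
    (c := 1 + ε - ∑ g ∈ P i, v g) (by rw [Fintype.card_fin]; omega) (by
      have hd' : (2 : ℝ) ≤ d := by exact_mod_cast hd
      rw [hP.sum_sum_eq, sum_eq_card_sub_one_add hg₀ hv, hcard, Fintype.card_fin]
      nlinarith)
  exact ⟨i, j, hji.symm, by linarith⟩

end OneSmallGood

theorem mms_strict_gap (d : ℕ) (hd : 2 ≤ d) (ε : ℝ) (hε0 : 0 < ε) (hε1 : ε < 1)
    (M : Finset α) (g0 : α) (hg0 : g0 ∈ M) (hcard : M.card = d)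
    (v : α → ℝ) (hv : ∀ g ∈ M, v g = if g = g0 then ε else 1) :
    MMS v M 2 d = 1 + ε ∧ 2 * MMS v M 1 d = 2 * ε := by
  obtain ⟨e⟩ : Nonempty (Fin d ≃ M) := ⟨(M.equivFinOfCardEq hcard).symm⟩
  have hP₀ := isPartition_singleton e
  have hvg0 : v g0 = ε := by simp [hv g0 hg0]
  have hMMS₂ : MMS v M 2 d = 1 + ε := by
    refine MMS_eq_of_isPartition hP₀ (fun S hS => ?_) (fun P hP => ?_)
    · obtain ⟨a, b, hab, rfl⟩ := card_eq_two.mp hS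
      simpa [sum_pair hab] using
        one_add_le_apply_add_apply hε1.le hv (e a).2 (e b).2 (by simpa using e.injective.ne hab)
    · obtain ⟨i, j, hij, h⟩ := hP.exists_pair_sum_le hd hε0.le hg0 hcard hv
      exact ⟨{i, j}, card_pair hij, by rwa [sum_pair hij]⟩
  have hMMS₁ : MMS v M 1 d = ε := by
    refine MMS_eq_of_isPartition hP₀ (fun S hS => ?_) (fun P hP => ?_)
    · obtain ⟨a, rfl⟩ := card_eq_one.mp hS
      simpa using le_apply_of_mem hε1.le hv (e a).2
    · obtain ⟨i, hi⟩ := hP.exists_sum_le_of_mem hcard hg0 (hvg0 ▸ hε0.le)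
      exact ⟨{i}, card_singleton i, by rwa [sum_singleton, ← hvg0]⟩
  exact ⟨hMMS₂, by rw [hMMS₁]⟩
end

section
/- General key combinatorial step of Proposition 5: let d ≥ 1 and for j ∈ [d²], let B_j be the family of subsets of M = {g_1,...,g_{2^{d²}−1}} containing strictly more than half the goods of {g_1,...,g_{2^j−1}}. If (A_1, A_2) is a partition of M and A_1 ∈ ⋂_{j=1}^d B_{(i_1−1)d+j} for some i_1 ∈ [d], then for every i_2 ∈ [d], A_2 ∉ ⋂_{j=1}^d B_{(j−1)d+i_2}. -/
open Finset

/-- `X` contains a majority of the goods `g_1, …, g_{2^j − 1}` (represented by the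
indices `0, …, 2^j − 2` of `Fin (2^(d^2) − 1)`). -/
def InB (d : ℕ) (j : ℕ) (X : Finset (Fin (2 ^ (d ^ 2) - 1))) : Prop :=
  ((2 : ℚ) ^ j - 1) / 2 <
    ((X.filter (fun i : Fin (2 ^ (d ^ 2) - 1) => (i : ℕ) < 2 ^ j - 1)).card : ℚ)

theorem Finset.card_filter_add_card_filter_le_of_disjoint {α : Type*} [Fintype α]
    [DecidableEq α] {A B : Finset α} (h : Disjoint A B) (p : α → Prop) [DecidablePred p] :
    #(A.filter p) + #(B.filter p) ≤ #(univ.filter p) := by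
  rw [← card_union_of_disjoint (disjoint_filter_filter h), ← filter_union]
  exact card_le_card (filter_subset_filter p (subset_univ _))

theorem InB.not_of_disjoint {d j : ℕ} {A B : Finset (Fin (2 ^ (d ^ 2) - 1))}
    (h : Disjoint A B) (hA : InB d j A) : ¬ InB d j B := by
  intro hB
  have hsum : #(A.filter fun i : Fin _ => (i : ℕ) < 2 ^ j - 1) +
      #(B.filter fun i : Fin _ => (i : ℕ) < 2 ^ j - 1) ≤ 2 ^ j - 1 :=
    (card_filter_add_card_filter_le_of_disjoint h _).trans
      (Fin.card_filter_val_lt.trans_le (min_le_right _ _))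
  have hsumℚ := (Nat.cast_le (α := ℚ)).mpr hsum
  push_cast [Nat.one_le_two_pow] at hsumℚ
  unfold InB at hA hB
  linarith

theorem responsive_construction_general_general (d : ℕ)
    (A₁ A₂ : Finset (Fin (2 ^ (d ^ 2) - 1)))
    (hdisj : Disjoint A₁ A₂)
    (i₁ : ℕ) (hi₁ : 1 ≤ i₁ ∧ i₁ ≤ d)
    (hA₁ : ∀ j, 1 ≤ j → j ≤ d → InB d ((i₁ - 1) * d + j) A₁) :
    ∀ i₂, 1 ≤ i₂ → i₂ ≤ d → ¬ (∀ j, 1 ≤ j → j ≤ d → InB d ((j - 1) * d + i₂) A₂) :=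
  fun i₂ hi₂ hi₂d hA₂ =>
    -- Both families contain `B_{(i₁-1)d+i₂}`: row `i₁`, column `i₂`.
    (hA₁ i₂ hi₂ hi₂d).not_of_disjoint hdisj (hA₂ i₁ hi₁.1 hi₁.2)

theorem responsive_construction_general (d : ℕ) (hd : 1 ≤ d)
    (A₁ A₂ : Finset (Fin (2 ^ (d ^ 2) - 1)))
    (hdisj : Disjoint A₁ A₂) (hunion : A₁ ∪ A₂ = Finset.univ)
    (i₁ : ℕ) (hi₁ : 1 ≤ i₁ ∧ i₁ ≤ d)
    (hA₁ : ∀ j, 1 ≤ j → j ≤ d → InB d ((i₁ - 1) * d + j) A₁) :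
    ∀ i₂, 1 ≤ i₂ → i₂ ≤ d → ¬ (∀ j, 1 ≤ j → j ≤ d → InB d ((j - 1) * d + i₂) A₂) :=
  responsive_construction_general_general d A₁ A₂ hdisj i₁ hi₁ hA₁
end
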